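/- Let σ > 0 and let J satisfy √(1+σ) < J < √σ · ζ_σ, where ζ_σ > √((1+σ)/σ) is the unique root greater than 1 of z^σ(σ(z−1)²+1) = exp(σ(z²−1)/2) on (1,∞). Set n_s = J/√σ and g(n) = J²/n + σn + exp(H(n)) with H(n) = (J²/2)(1 − 1/n²) − σ ln n. Then g(1) > g(n_s). -/

import Mathlib

open Real

/-! With `z = J / √σ` one has `J² = σ z²`, so
`g 1 - g z = σ (z - 1)² + 1 - exp (σ (z² - 1) / 2) / z ^ σ`, and the claim is that
`φ t = logGap σ t = σ log t + log (σ (t - 1)² + 1) - σ (t² - 1) / 2` is positive at `t = z`.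
A direct computation gives `φ' t = σ (t - 1)² (1 - σ (t² - 1)) / (t (σ (t - 1)² + 1))`, so `φ` is
strictly decreasing on `[√((1 + σ) / σ), ∞)`. Both `z` and `ζ` lie in that ray with `z < ζ`,
and `φ ζ = 0` is the root equation, hence `φ z > 0`. -/

noncomputable def logGap (σ t : ℝ) : ℝ :=
  σ * log t + log (σ * (t - 1) ^ 2 + 1) - σ * (t ^ 2 - 1) / 2

lemma logGap_eq_log_sub {σ t : ℝ} (hσ : 0 ≤ σ) (ht : 0 < t) :
    logGap σ t = log (t ^ σ * (σ * (t - 1) ^ 2 + 1)) - σ * (t ^ 2 - 1) / 2 := by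
  have hq : 0 < σ * (t - 1) ^ 2 + 1 := by positivity
  rw [logGap, log_mul (rpow_pos_of_pos ht σ).ne' hq.ne', log_rpow ht]

lemma hasDerivAt_logGap {σ t : ℝ} (hσ : 0 ≤ σ) (ht : 0 < t) :
    HasDerivAt (logGap σ)
      (σ * (t - 1) ^ 2 * (1 - σ * (t ^ 2 - 1)) / (t * (σ * (t - 1) ^ 2 + 1))) t := by
  have hq : σ * (t - 1) ^ 2 + 1 ≠ 0 := by positivity
  have hsq := ((hasDerivAt_id' t).sub_const 1).fun_pow 2
  have h := ((hasDerivAt_log ht.ne').const_mul σ).add ((hsq.const_mul σ).add_const 1 |>.log hq)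
    |>.sub (((hasDerivAt_pow 2 t).sub_const 1).const_mul σ |>.div_const 2)
  refine h.congr_deriv ?_
  field_simp
  ring

lemma logGap_strictAntiOn {σ : ℝ} (hσ : 0 < σ) :
    StrictAntiOn (logGap σ) (Set.Ici (√((1 + σ) / σ))) := by
  have hpos : ∀ t ∈ Set.Ici (√((1 + σ) / σ)), 0 < t := fun t ht =>
    (sqrt_pos.2 (by positivity)).trans_le ht
  refine strictAntiOn_of_deriv_neg (convex_Ici _)
    (fun t ht => (hasDerivAt_logGap hσ.le (hpos t ht)).continuousAt.continuousWithinAt) ?_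
  rw [interior_Ici]
  intro t ht
  have ht0 := hpos t (Set.mem_Ici_of_Ioi ht)
  have hsq : (1 + σ) / σ < t ^ 2 := (sqrt_lt' ht0).1 ht
  rw [div_lt_iff₀ hσ] at hsq
  have ht1 : 1 < t := by
    by_contra! h
    nlinarith [mul_le_mul_of_nonneg_left (pow_le_one₀ ht0.le h : t ^ 2 ≤ 1) hσ.le]
  rw [(hasDerivAt_logGap hσ.le ht0).deriv]
  exact div_neg_of_neg_of_pos (mul_neg_of_pos_of_neg (by positivity) (by nlinarith)) (by positivity)

lemma exp_lt_of_logGap_pos {σ t : ℝ} (hσ : 0 ≤ σ) (ht : 0 < t) (h : 0 < logGap σ t) :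
    exp (σ * (t ^ 2 - 1) / 2) < t ^ σ * (σ * (t - 1) ^ 2 + 1) := by
  rw [logGap_eq_log_sub hσ ht, sub_pos] at h
  exact (lt_log_iff_exp_lt (by positivity)).1 h

theorem stmt_7_general (σ J ζ : ℝ) (hσ : 0 < σ)
    (hζroot : ζ ^ σ * (σ * (ζ - 1) ^ 2 + 1) = Real.exp (σ * (ζ ^ 2 - 1) / 2))
    (hJ1 : Real.sqrt (1 + σ) < J) (hJ2 : J < Real.sqrt σ * ζ)
    (H g : ℝ → ℝ)
    (hH : ∀ n : ℝ, 0 < n → H n = J ^ 2 / 2 * (1 - 1 / n ^ 2) - σ * Real.log n)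
    (hg : ∀ n : ℝ, 0 < n → g n = J ^ 2 / n + σ * n + Real.exp (H n)) :
    g 1 > g (J / Real.sqrt σ) := by
  set z := J / √σ with hz
  have hσs : 0 < √σ := sqrt_pos.2 hσ
  have hzs : √((1 + σ) / σ) < z := by
    rwa [sqrt_div' _ hσ.le, div_lt_div_iff_of_pos_right hσs]
  have hz0 : 0 < z := (sqrt_nonneg _).trans_lt hzs
  have hzζ : z < ζ := by rw [hz, div_lt_iff₀ hσs]; linarith [mul_comm ζ √σ]
  have hJz : J ^ 2 = σ * z ^ 2 := by rw [hz, div_pow, sq_sqrt hσ.le]; field_simp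
  have hgap : 0 < logGap σ z := by
    have hζgap : logGap σ ζ = 0 := by
      rw [logGap_eq_log_sub hσ.le (hz0.trans hzζ), hζroot, log_exp, sub_self]
    exact hζgap ▸ logGap_strictAntiOn hσ hzs.le (hzs.trans hzζ).le hzζ
  have hkey := exp_lt_of_logGap_pos hσ.le hz0 hgap
  have hg1 : g 1 = σ * z ^ 2 + σ + 1 := by rw [hg 1 one_pos, hH 1 one_pos, hJz]; simp
  have hHz : H z = σ * (z ^ 2 - 1) / 2 - σ * log z := by rw [hH z hz0, hJz]; field_simp
  have hgz : g z = 2 * σ * z + exp (σ * (z ^ 2 - 1) / 2) / z ^ σ := by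
    rw [hg z hz0, hHz, exp_sub, mul_comm σ (log z), ← rpow_def_of_pos hz0, hJz]
    field_simp
    ring
  have hdiv := (div_lt_iff₀ (rpow_pos_of_pos hz0 σ)).2 (mul_comm (z ^ σ) _ ▸ hkey)
  rw [hg1, hgz]
  linarith

theorem stmt_7 (σ J ζ : ℝ) (hσ : 0 < σ)
    (hζ1 : Real.sqrt ((1 + σ) / σ) < ζ)
    (hζroot : ζ ^ σ * (σ * (ζ - 1) ^ 2 + 1) = Real.exp (σ * (ζ ^ 2 - 1) / 2))
    (hζuniq : ∀ z : ℝ, 1 < z →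
      z ^ σ * (σ * (z - 1) ^ 2 + 1) = Real.exp (σ * (z ^ 2 - 1) / 2) → z = ζ)
    (hJ1 : Real.sqrt (1 + σ) < J) (hJ2 : J < Real.sqrt σ * ζ)
    (H g : ℝ → ℝ)
    (hH : ∀ n : ℝ, 0 < n → H n = J ^ 2 / 2 * (1 - 1 / n ^ 2) - σ * Real.log n)
    (hg : ∀ n : ℝ, 0 < n → g n = J ^ 2 / n + σ * n + Real.exp (H n)) :
    g 1 > g (J / Real.sqrt σ) :=
  stmt_7_general σ J ζ hσ hζroot hJ1 hJ2 H g hH hg
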